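/- (Mean-zero property of the efficient influence function, Theorem 2.) Fix a* ∈ {0,1} and suppose c := μ(A=a*, S=0) > 0 and that every w with μ(W=w) > 0 satisfies μ(W=w, A=1, S=1) > 0 and μ(W=w, A=0, S=1) > 0. Define, for ω ∈ Ω, D(ω) := 1{A=1,S=1}(ω)·g₍a*,0₎(W(ω))/(c·g₍1,1₎(W(ω)))·(ΔY(ω) − m₁(W(ω))) − 1{A=0,S=1}(ω)·g₍a*,0₎(W(ω))/(c·g₍0,1₎(W(ω)))·(ΔY(ω) − m₀(W(ω))) + (1{A=a*,S=0}(ω)/c)·(m₁(W(ω)) − m₀(W(ω))) − ψ(a*), with all nuisance functions evaluated at their true values. Then E_μ[D] = 0. -/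

import Mathlib

/-! Within each stratum `{W = w, A = a, S = 1}` the residual `ΔY - m_a(w)` has integral zero,
because `m_a(w)` is its conditional mean there, and the inverse-propensity weight depends on `ω`
only through `W`; so both study-sample terms integrate to zero. The target-population term
integrates to `c⁻¹ ∫_{A = a*, S = 0} (m₁ - m₀)(W) = ψ(a*)`, which cancels the constant. -/

open MeasureTheory ProbabilityTheory
open scoped Classical

noncomputable section

/-- Conditional expectation of `X` given the event `E`. -/
def cexp {Ω : Type*} [MeasurableSpace Ω] (μ : Measure Ω) (X : Ω → ℝ) (E : Set Ω) : ℝ :=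
  ∫ ω, X ω ∂(μ[|E])

/-- The event `{W = w, A = a, S = s}`. -/
def evtWAS {Ω 𝒲 : Type*} (W : Ω → 𝒲) (A S : Ω → Bool) (w : 𝒲) (a s : Bool) : Set Ω :=
  {ω | W ω = w ∧ A ω = a ∧ S ω = s}

/-- The event `{A = a, S = s}`. -/
def evtAS {Ω : Type*} (A S : Ω → Bool) (a s : Bool) : Set Ω :=
  {ω | A ω = a ∧ S ω = s}

/-- The outcome-difference regression `m_a(w) = E[Y₁ - Y₀ | W = w, A = a, S = 1]`. -/
def mfun {Ω 𝒲 : Type*} [MeasurableSpace Ω] (μ : Measure Ω) (W : Ω → 𝒲) (A S : Ω → Bool)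
    (Y₀ Y₁ : Ω → ℝ) (a : Bool) (w : 𝒲) : ℝ :=
  cexp μ (fun ω => Y₁ ω - Y₀ ω) (evtWAS W A S w a true)

/-- The true propensity `g_{a,s}(w) = μ({A = a, S = s} | {W = w})`. -/
def gprop {Ω 𝒲 : Type*} [MeasurableSpace Ω] (μ : Measure Ω) (W : Ω → 𝒲) (A S : Ω → Bool)
    (a s : Bool) (w : 𝒲) : ℝ :=
  ((μ[|{ω | W ω = w}]) {ω | A ω = a ∧ S ω = s}).toReal

/-- The target statistical parameter `ψ(a*) = E[m₁(W) − m₀(W) | A = a*, S = 0]`. -/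
def psiParam {Ω 𝒲 : Type*} [MeasurableSpace Ω] (μ : Measure Ω) (W : Ω → 𝒲) (A S : Ω → Bool)
    (Y₀ Y₁ : Ω → ℝ) (astar : Bool) : ℝ :=
  cexp μ (fun ω => mfun μ W A S Y₀ Y₁ true (W ω) - mfun μ W A S Y₀ Y₁ false (W ω))
    (evtAS A S astar false)

lemma ite_eq_indicator_setOf {Ω : Type*} (P : Ω → Prop) [DecidablePred P] (F : Ω → ℝ) :
    (fun ω => if P ω then F ω else 0) = {ω | P ω}.indicator F := by
  funext ω
  simp [Set.indicator_apply]

lemma stratified_apply_eq_sum_indicator {Ω 𝒲 : Type*} [Fintype 𝒲] (W : Ω → 𝒲) (g : 𝒲 → Ω → ℝ)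
    (ω : Ω) :
    g (W ω) ω = ∑ w, (W ⁻¹' {w}).indicator (g w) ω := by
  rw [Finset.sum_eq_single (W ω) (fun w _ hw => ?_) (by simp)]
  · simp
  · simp [Ne.symm hw]

section ConditionalMean

variable {Ω : Type*} [MeasurableSpace Ω] {μ : Measure Ω}

lemma cexp_eq_inv_mul_setIntegral (μ : Measure Ω) (X : Ω → ℝ) (E : Set Ω) :
    cexp μ X E = (μ.real E)⁻¹ * ∫ ω in E, X ω ∂μ := by
  rw [cexp, ProbabilityTheory.cond, integral_smul_measure, ENNReal.toReal_inv, smul_eq_mul,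
    measureReal_def]

lemma setIntegral_sub_cexp {E : Set Ω} (hE : μ E ≠ ⊤) {X : Ω → ℝ} (hX : IntegrableOn X E μ) :
    ∫ ω in E, (X ω - cexp μ X E) ∂μ = 0 := by
  have : Fact (μ E < ⊤) := ⟨hE.lt_top⟩
  rw [integral_sub hX (integrable_const _), setIntegral_const, smul_eq_mul,
    cexp_eq_inv_mul_setIntegral]
  rcases eq_or_ne (μ.real E) 0 with h0 | h0
  · have : μ.restrict E = 0 := Measure.restrict_eq_zero.mpr ((measureReal_eq_zero_iff hE).mp h0)
    simp [this]
  · field_simp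
    ring

lemma integral_ite_one_div_mul_eq_cexp {P : Ω → Prop} [DecidablePred P]
    (hP : MeasurableSet {ω | P ω}) (X : Ω → ℝ) :
    ∫ ω, (if P ω then 1 / (μ {ω | P ω}).toReal * X ω else 0) ∂μ = cexp μ X {ω | P ω} := by
  rw [ite_eq_indicator_setOf, integral_indicator hP, integral_const_mul,
    cexp_eq_inv_mul_setIntegral, one_div, measureReal_def]

end ConditionalMean

section Stratification

variable {Ω 𝒲 : Type*} [MeasurableSpace Ω] {μ : Measure Ω}
  [Fintype 𝒲] [MeasurableSpace 𝒲] [MeasurableSingletonClass 𝒲] {W : Ω → 𝒲}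

lemma integrable_stratified (hW : Measurable W) {g : 𝒲 → Ω → ℝ}
    (hg : ∀ w, Integrable (g w) μ) : Integrable (fun ω => g (W ω) ω) μ := by
  rw [funext (stratified_apply_eq_sum_indicator W g)]
  exact integrable_finsetSum _ fun w _ => (hg w).indicator (hW (measurableSet_singleton w))

lemma integral_stratified_eq_sum (hW : Measurable W) {g : 𝒲 → Ω → ℝ}
    (hg : ∀ w, Integrable (g w) μ) :
    ∫ ω, g (W ω) ω ∂μ = ∑ w, ∫ ω in W ⁻¹' {w}, g w ω ∂μ := by
  rw [funext (stratified_apply_eq_sum_indicator W g), integral_finsetSum _ fun w _ =>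
    (hg w).indicator (hW (measurableSet_singleton w))]
  exact Finset.sum_congr rfl fun w _ => integral_indicator (hW (measurableSet_singleton w))

lemma integrable_ite_stratified (hW : Measurable W) {P : Ω → Prop} [DecidablePred P]
    (hP : MeasurableSet {ω | P ω}) {F : 𝒲 → Ω → ℝ} (hF : ∀ w, Integrable (F w) μ) :
    Integrable (fun ω => if P ω then F (W ω) ω else 0) μ := by
  refine integrable_stratified (g := fun w ω => if P ω then F w ω else 0) hW fun w => ?_
  rw [ite_eq_indicator_setOf]
  exact (hF w).indicator hP

lemma integral_ite_mul_sub_cexp_eq_zero [IsFiniteMeasure μ] (hW : Measurable W) {P : Ω → Prop}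
    [DecidablePred P] (hP : MeasurableSet {ω | P ω}) {X : Ω → ℝ} (hX : Integrable X μ)
    (f : 𝒲 → ℝ) :
    ∫ ω, (if P ω then f (W ω) * (X ω - cexp μ X {ω' | W ω' = W ω ∧ P ω'}) else 0) ∂μ = 0 := by
  let F : 𝒲 → Ω → ℝ := fun w ω => f w * (X ω - cexp μ X {ω' | W ω' = w ∧ P ω'})
  have hF : ∀ w, Integrable (fun ω => if P ω then F w ω else 0) μ := fun w => by
    rw [ite_eq_indicator_setOf]
    exact ((hX.sub (integrable_const _)).const_mul _).indicator hP
  have hstratum : ∀ w, ∫ ω in W ⁻¹' {w}, (if P ω then F w ω else 0) ∂μ = 0 := fun w => by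
    rw [ite_eq_indicator_setOf, setIntegral_indicator hP, integral_const_mul]
    exact mul_eq_zero_of_right _ (setIntegral_sub_cexp (measure_ne_top _ _) hX.integrableOn)
  rw [integral_stratified_eq_sum (g := fun w ω => if P ω then F w ω else 0) hW hF]
  exact Finset.sum_eq_zero fun w _ => hstratum w

end Stratification

section InfluenceFunction

variable {Ω 𝒲 : Type*} [MeasurableSpace Ω] {μ : Measure Ω}
  {S A : Ω → Bool} {W : Ω → 𝒲} {Y₀ Y₁ : Ω → ℝ}

lemma measurableSet_evtAS (hS : Measurable S) (hA : Measurable A) (a s : Bool) :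
    MeasurableSet (evtAS A S a s) :=
  (hA (measurableSet_singleton a)).inter (hS (measurableSet_singleton s))

lemma integral_targetTerm_eq_cexp (hS : Measurable S) (hA : Measurable A) (a s : Bool)
    (h : 𝒲 → ℝ) :
    ∫ ω, (if A ω = a ∧ S ω = s then 1 / (μ (evtAS A S a s)).toReal * h (W ω) else 0) ∂μ
      = cexp μ (fun ω => h (W ω)) (evtAS A S a s) :=
  integral_ite_one_div_mul_eq_cexp (measurableSet_evtAS hS hA a s) _

variable [Fintype 𝒲] [MeasurableSpace 𝒲] [MeasurableSingletonClass 𝒲]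

lemma integrable_weightedResidual [IsFiniteMeasure μ] (hS : Measurable S) (hA : Measurable A)
    (hW : Measurable W) (hY₀ : Integrable Y₀ μ) (hY₁ : Integrable Y₁ μ) (a : Bool)
    (f : 𝒲 → ℝ) :
    Integrable (fun ω => if A ω = a ∧ S ω = true then
      f (W ω) * ((Y₁ ω - Y₀ ω) - mfun μ W A S Y₀ Y₁ a (W ω)) else 0) μ :=
  integrable_ite_stratified (F := fun w ω => f w * ((Y₁ ω - Y₀ ω) - mfun μ W A S Y₀ Y₁ a w))
    hW (measurableSet_evtAS hS hA a true)
    fun _ => ((hY₁.sub hY₀).sub (integrable_const _)).const_mul _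

lemma integral_weightedResidual_eq_zero [IsFiniteMeasure μ] (hS : Measurable S)
    (hA : Measurable A) (hW : Measurable W) (hY₀ : Integrable Y₀ μ) (hY₁ : Integrable Y₁ μ)
    (a : Bool) (f : 𝒲 → ℝ) :
    ∫ ω, (if A ω = a ∧ S ω = true then
      f (W ω) * ((Y₁ ω - Y₀ ω) - mfun μ W A S Y₀ Y₁ a (W ω)) else 0) ∂μ = 0 :=
  integral_ite_mul_sub_cexp_eq_zero (X := fun ω => Y₁ ω - Y₀ ω) hW
    (measurableSet_evtAS hS hA a true) (hY₁.sub hY₀) f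

lemma integrable_targetTerm [IsFiniteMeasure μ] (hS : Measurable S) (hA : Measurable A)
    (hW : Measurable W) (a s : Bool) (h : 𝒲 → ℝ) :
    Integrable (fun ω => if A ω = a ∧ S ω = s then
      1 / (μ (evtAS A S a s)).toReal * h (W ω) else 0) μ :=
  integrable_ite_stratified (F := fun w _ => 1 / (μ (evtAS A S a s)).toReal * h w)
    hW (measurableSet_evtAS hS hA a s) fun _ => integrable_const _

end InfluenceFunction

theorem eif_mean_zero_general
    {Ω : Type*} [MeasurableSpace Ω] (μ : Measure Ω) [IsProbabilityMeasure μ]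
    {𝒲 : Type*} [Fintype 𝒲] [MeasurableSpace 𝒲] [MeasurableSingletonClass 𝒲]
    (S A : Ω → Bool) (W : Ω → 𝒲) (Y₀ Y₁ : Ω → ℝ)
    (hS : Measurable S) (hA : Measurable A) (hW : Measurable W)
    (hY₀ : Integrable Y₀ μ) (hY₁ : Integrable Y₁ μ)
    (astar : Bool) :
    ∫ ω,
      ((if A ω = true ∧ S ω = true then
          gprop μ W A S astar false (W ω)
            / ((μ (evtAS A S astar false)).toReal * gprop μ W A S true true (W ω))
            * ((Y₁ ω - Y₀ ω) - mfun μ W A S Y₀ Y₁ true (W ω))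
        else 0)
      - (if A ω = false ∧ S ω = true then
          gprop μ W A S astar false (W ω)
            / ((μ (evtAS A S astar false)).toReal * gprop μ W A S false true (W ω))
            * ((Y₁ ω - Y₀ ω) - mfun μ W A S Y₀ Y₁ false (W ω))
        else 0)
      + (if A ω = astar ∧ S ω = false then
          (1 / (μ (evtAS A S astar false)).toReal)
            * (mfun μ W A S Y₀ Y₁ true (W ω) - mfun μ W A S Y₀ Y₁ false (W ω))
        else 0)
      - psiParam μ W A S Y₀ Y₁ astar) ∂μ
    = 0 := by
  let f : Bool → 𝒲 → ℝ := fun a w =>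
    gprop μ W A S astar false w / ((μ (evtAS A S astar false)).toReal * gprop μ W A S a true w)
  let τ : 𝒲 → ℝ := fun w => mfun μ W A S Y₀ Y₁ true w - mfun μ W A S Y₀ Y₁ false w
  have h₁ := integrable_weightedResidual hS hA hW hY₀ hY₁ true (f true)
  have h₂ := integrable_weightedResidual hS hA hW hY₀ hY₁ false (f false)
  have h₃ := integrable_targetTerm (μ := μ) hS hA hW astar false τ
  rw [integral_sub ((h₁.sub' h₂).fun_add h₃) (integrable_const _),
    integral_add (h₁.sub' h₂) h₃, integral_sub h₁ h₂,
    integral_weightedResidual_eq_zero hS hA hW hY₀ hY₁ true (f true),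
    integral_weightedResidual_eq_zero hS hA hW hY₀ hY₁ false (f false),
    integral_targetTerm_eq_cexp hS hA astar false τ, integral_const, probReal_univ, one_smul,
    sub_zero, zero_add]
  exact sub_self _

/-- Theorem 2: the efficient influence function, evaluated at the true
nuisance values, has mean zero under `μ`. -/
theorem eif_mean_zero
    {Ω : Type*} [MeasurableSpace Ω] (μ : Measure Ω) [IsProbabilityMeasure μ]
    {𝒲 : Type*} [Fintype 𝒲] [MeasurableSpace 𝒲] [MeasurableSingletonClass 𝒲]
    (S A : Ω → Bool) (W : Ω → 𝒲) (Y₀ Y₁ : Ω → ℝ)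
    (hS : Measurable S) (hA : Measurable A) (hW : Measurable W)
    (hY₀ : Integrable Y₀ μ) (hY₁ : Integrable Y₁ μ)
    (astar : Bool)
    (hc : 0 < μ (evtAS A S astar false))
    (hpos : ∀ w : 𝒲, 0 < μ {ω | W ω = w} →
      0 < μ (evtWAS W A S w true true) ∧ 0 < μ (evtWAS W A S w false true)) :
    ∫ ω,
      ((if A ω = true ∧ S ω = true then
          gprop μ W A S astar false (W ω)
            / ((μ (evtAS A S astar false)).toReal * gprop μ W A S true true (W ω))
            * ((Y₁ ω - Y₀ ω) - mfun μ W A S Y₀ Y₁ true (W ω))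
        else 0)
      - (if A ω = false ∧ S ω = true then
          gprop μ W A S astar false (W ω)
            / ((μ (evtAS A S astar false)).toReal * gprop μ W A S false true (W ω))
            * ((Y₁ ω - Y₀ ω) - mfun μ W A S Y₀ Y₁ false (W ω))
        else 0)
      + (if A ω = astar ∧ S ω = false then
          (1 / (μ (evtAS A S astar false)).toReal)
            * (mfun μ W A S Y₀ Y₁ true (W ω) - mfun μ W A S Y₀ Y₁ false (W ω))
        else 0)
      - psiParam μ W A S Y₀ Y₁ astar) ∂μ
    = 0 :=
  eif_mean_zero_general μ S A W Y₀ Y₁ hS hA hW hY₀ hY₁ astar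

end
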